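/- Let d ≥ 2, let a ∈ ℝ^d, and let c_{i,j} (i ≠ j) be real constants with c_{i,j} = c_{j,i} ≥ 0 for all i ≠ j and c_{i,i+1} > 0 for i = 1,…,d−1. Then there exists ξ = (ξ_1,…,ξ_d) ∈ Δ_d (in particular ξ_1 < ξ_2 < ⋯ < ξ_d) such that ξ_i = a_i + Σ_{j ≠ i} c_{i,j}/(ξ_i − ξ_j) for every i = 1,…,d. -/

import Mathlib

/-!
The solutions in the chamber are the critical points of the energy
`E ξ = ∑ i, (ξ i ^ 2 / 2 - a i * ξ i) - ∑_{i < j} c i j * log |ξ i - ξ j|`,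
whose partial derivatives are exactly the equations of the system because `c` is symmetric.
On the chamber `E` is coercive: the quadratic part dominates at infinity, and when two
neighbouring coordinates collide the term `-c i (i+1) * log (ξ (i+1) - ξ i)` tends to `+∞`,
while every other logarithmic term is bounded above on bounded sets. Hence a sublevel set of `E`
in the chamber lies in a compact subset of this open set, and a minimiser of `E` there solves
the system.
-/

open Finset Real

section Energy

variable {ι : Type*} [Fintype ι]

lemma sq_norm_le_sum_sq (ξ : ι → ℝ) : ‖ξ‖ ^ 2 ≤ ∑ i, ξ i ^ 2 := by
  have hle : ‖ξ‖ ≤ √(∑ i, ξ i ^ 2) := by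
    refine (pi_norm_le_iff_of_nonneg (sqrt_nonneg _)).2 fun i => ?_
    rw [Real.norm_eq_abs, ← sqrt_sq_eq_abs]
    exact sqrt_le_sqrt (single_le_sum (fun j _ => sq_nonneg (ξ j)) (mem_univ i))
  calc ‖ξ‖ ^ 2 ≤ √(∑ i, ξ i ^ 2) ^ 2 := pow_le_pow_left₀ (norm_nonneg ξ) hle 2
    _ = ∑ i, ξ i ^ 2 := sq_sqrt (sum_nonneg fun i _ => sq_nonneg (ξ i))

lemma log_sub_le_two_mul_norm (ξ : ι → ℝ) (p q : ι) : log (ξ p - ξ q) ≤ 2 * ‖ξ‖ :=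
  calc log (ξ p - ξ q) ≤ |ξ p - ξ q| := (log_abs _).symm.le.trans (log_le_self (abs_nonneg _))
    _ ≤ |ξ p| + |ξ q| := abs_sub _ _
    _ ≤ 2 * ‖ξ‖ := by
      have hp : |ξ p| ≤ ‖ξ‖ := norm_le_pi_norm ξ p
      have hq : |ξ q| ≤ ‖ξ‖ := norm_le_pi_norm ξ q
      linarith

lemma norm_sq_div_two_sub_le_sum (a ξ : ι → ℝ) :
    ‖ξ‖ ^ 2 / 2 - (∑ i, |a i|) * ‖ξ‖ ≤ ∑ i, (ξ i ^ 2 / 2 - a i * ξ i) := by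
  have hlin : ∀ i, a i * ξ i ≤ |a i| * ‖ξ‖ := fun i =>
    calc a i * ξ i ≤ |a i| * |ξ i| := by rw [← abs_mul]; exact le_abs_self _
      _ ≤ |a i| * ‖ξ‖ := mul_le_mul_of_nonneg_left (norm_le_pi_norm ξ i) (abs_nonneg _)
  calc ‖ξ‖ ^ 2 / 2 - (∑ i, |a i|) * ‖ξ‖ ≤ ∑ i, (ξ i ^ 2 / 2 - |a i| * ‖ξ‖) := by
        rw [sum_sub_distrib, ← sum_div, ← sum_mul]
        linarith [sq_norm_le_sum_sq ξ]
    _ ≤ ∑ i, (ξ i ^ 2 / 2 - a i * ξ i) := sum_le_sum fun i _ => by linarith [hlin i]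

variable [DecidableEq ι] (a : ι → ℝ) (c : ι → ι → ℝ)

/-- Since `Real.log x = Real.log |x|`, for symmetric `c` the interaction term is
`∑_{p < q} c p q * log |ξ p - ξ q|`. -/
noncomputable def energy (ξ : ι → ℝ) : ℝ :=
  ∑ i, (ξ i ^ 2 / 2 - a i * ξ i) - 1 / 2 * ∑ p, ∑ q ∈ univ.erase p, c p q * log (ξ p - ξ q)

def energySlope : ℝ := ∑ i, |a i| + ∑ p, ∑ q ∈ univ.erase p, c p q

variable {a c} (hc : ∀ p q, p ≠ q → 0 ≤ c p q)
include hc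

lemma sum_sum_mul_log_sub_le_of_ne (ξ : ι → ℝ) {k l : ι} (hkl : k ≠ l) :
    ∑ p, ∑ q ∈ univ.erase p, c p q * log (ξ p - ξ q)
      ≤ c k l * (log (ξ k - ξ l) - 2 * ‖ξ‖) + 2 * (∑ p, ∑ q ∈ univ.erase p, c p q) * ‖ξ‖ := by
  set g : ι → ι → ℝ := fun p q => c p q * (log (ξ p - ξ q) - 2 * ‖ξ‖)
  have hg : ∀ p, ∀ q ∈ univ.erase p, g p q ≤ 0 := fun p q hq =>
    mul_nonpos_of_nonneg_of_nonpos (hc p q (ne_of_mem_erase hq).symm)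
      (by linarith [log_sub_le_two_mul_norm ξ p q])
  have hrow : ∑ q ∈ univ.erase k, g k q ≤ g k l := by
    rw [← add_sum_erase _ _ (mem_erase.2 ⟨hkl.symm, mem_univ l⟩)]
    linarith [sum_nonpos (s := (univ.erase k).erase l) fun q hq => hg k q (mem_of_mem_erase hq)]
  have hall : ∑ p, ∑ q ∈ univ.erase p, g p q ≤ g k l := by
    rw [← add_sum_erase _ _ (mem_univ k)]
    linarith [sum_nonpos fun p (_ : p ∈ univ.erase k) => sum_nonpos (hg p)]
  have hsplit : ∑ p, ∑ q ∈ univ.erase p, g p q = ∑ p, ∑ q ∈ univ.erase p, c p q * log (ξ p - ξ q)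
      - 2 * (∑ p, ∑ q ∈ univ.erase p, c p q) * ‖ξ‖ := by
    simp only [g, mul_sub, sum_sub_distrib, mul_sum, sum_mul]
    congr 1
    exact sum_congr rfl fun p _ => sum_congr rfl fun q _ => by ring
  linarith

lemma sum_sum_mul_log_sub_le (ξ : ι → ℝ) :
    ∑ p, ∑ q ∈ univ.erase p, c p q * log (ξ p - ξ q)
      ≤ 2 * (∑ p, ∑ q ∈ univ.erase p, c p q) * ‖ξ‖ := by
  simp only [mul_sum, sum_mul]
  refine sum_le_sum fun p _ => sum_le_sum fun q hq => ?_
  calc c p q * log (ξ p - ξ q) ≤ c p q * (2 * ‖ξ‖) :=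
        mul_le_mul_of_nonneg_left (log_sub_le_two_mul_norm ξ p q) (hc p q (ne_of_mem_erase hq).symm)
    _ = 2 * c p q * ‖ξ‖ := by ring

lemma energySlope_nonneg : 0 ≤ energySlope a c :=
  add_nonneg (sum_nonneg fun _ _ => abs_nonneg _)
    (sum_nonneg fun p _ => sum_nonneg fun q hq => hc p q (ne_of_mem_erase hq).symm)

lemma norm_sq_div_two_sub_le_energy (ξ : ι → ℝ) :
    ‖ξ‖ ^ 2 / 2 - energySlope a c * ‖ξ‖ ≤ energy a c ξ := by
  have := sum_sum_mul_log_sub_le hc ξ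
  rw [energy, energySlope]
  nlinarith [norm_sq_div_two_sub_le_sum a ξ]

lemma neg_sub_log_le_energy (ξ : ι → ℝ) {k l : ι} (hkl : k ≠ l) :
    -(energySlope a c * ‖ξ‖) - c k l / 2 * log (ξ k - ξ l) ≤ energy a c ξ := by
  have := sum_sum_mul_log_sub_le_of_ne hc ξ hkl
  have := mul_nonneg (hc k l hkl) (norm_nonneg ξ)
  rw [energy, energySlope]
  nlinarith [norm_sq_div_two_sub_le_sum a ξ, sq_nonneg ‖ξ‖]

lemma norm_le_of_energy_le {ξ : ι → ℝ} {m : ℝ} (hm : energy a c ξ ≤ m) :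
    ‖ξ‖ ≤ 2 * energySlope a c + 2 * |m| + 2 := by
  have := norm_sq_div_two_sub_le_energy (a := a) hc ξ
  have := energySlope_nonneg (a := a) hc
  by_contra! h
  have hpos : 0 < ‖ξ‖ := by linarith [abs_nonneg m]
  nlinarith [le_abs_self m, abs_nonneg m]

lemma exp_le_sub_of_energy_le {ξ : ι → ℝ} {m R : ℝ} (hm : energy a c ξ ≤ m) (hR : ‖ξ‖ ≤ R)
    {k l : ι} (hkl : k ≠ l) (hckl : 0 < c k l) (hlt : ξ k < ξ l) :
    exp (-2 * (m + energySlope a c * R) / c k l) ≤ ξ l - ξ k := by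
  have := neg_sub_log_le_energy (a := a) hc ξ hkl
  rw [← neg_sub (ξ l), log_neg_eq_log] at this
  have := mul_le_mul_of_nonneg_left hR (energySlope_nonneg (a := a) hc)
  rw [← exp_log (sub_pos.2 hlt), exp_le_exp, div_le_iff₀ hckl]
  linarith

omit hc

lemma continuousOn_energy : ContinuousOn (energy a c) {ξ | Function.Injective ξ} := by
  refine ((continuous_finsetSum _ fun i _ => by fun_prop).continuousOn).sub
    (continuousOn_const.mul (continuousOn_finsetSum _ fun p _ =>
      continuousOn_finsetSum _ fun q hq => continuousOn_const.mul (ContinuousOn.log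
        (by fun_prop) fun ξ hξ => sub_ne_zero.2 (hξ.ne (ne_of_mem_erase hq).symm))))

lemma hasDerivAt_energy_add_smul {ξ : ι → ℝ} (hξ : Function.Injective ξ) (v : ι → ℝ) :
    HasDerivAt (fun t : ℝ => energy a c (ξ + t • v))
      (∑ i, (ξ i - a i) * v i
        - 1 / 2 * ∑ p, ∑ q ∈ univ.erase p, c p q * ((v p - v q) / (ξ p - ξ q))) 0 := by
  have hline : ∀ i, HasDerivAt (fun t : ℝ => ξ i + t * v i) (v i) 0 := fun i => by
    simpa using ((hasDerivAt_id (0 : ℝ)).mul_const (v i)).const_add (ξ i)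
  have hquad : ∀ i, HasDerivAt (fun t : ℝ => (ξ i + t * v i) ^ 2 / 2 - a i * (ξ i + t * v i))
      ((ξ i - a i) * v i) 0 := fun i => by
    refine ((((hline i).fun_pow 2).div_const 2).fun_sub ((hline i).const_mul (a i))).congr_deriv ?_
    simp only [Nat.cast_ofNat, zero_mul, add_zero, Nat.add_one_sub_one, pow_one]
    ring
  have hlog : ∀ p, ∀ q ∈ univ.erase p,
      HasDerivAt (fun t : ℝ => c p q * log ((ξ p + t * v p) - (ξ q + t * v q)))
        (c p q * ((v p - v q) / (ξ p - ξ q))) 0 := fun p q hq => by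
    have hne : ξ p - ξ q ≠ 0 := sub_ne_zero.2 (hξ.ne (ne_of_mem_erase hq).symm)
    simpa using (((hline p).sub (hline q)).log (by simpa using hne)).const_mul (c p q)
  simpa only [energy, Pi.add_apply, Pi.smul_apply, smul_eq_mul] using
    (HasDerivAt.fun_sum fun i _ => hquad i).fun_sub
      ((HasDerivAt.fun_sum fun p _ => HasDerivAt.fun_sum (hlog p)).const_mul (1 / 2))

lemma sum_sum_mul_single_sub_div (hsymm : ∀ i j, i ≠ j → c i j = c j i) (ξ : ι → ℝ) (i : ι) :
    ∑ p, ∑ q ∈ univ.erase p,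
        c p q * (((Pi.single i 1 : ι → ℝ) p - (Pi.single i 1 : ι → ℝ) q) / (ξ p - ξ q))
      = 2 * ∑ j ∈ univ.erase i, c i j / (ξ i - ξ j) := by
  rw [sum_erase _ (by simp), sum_congr rfl fun p _ => sum_erase _ (by simp)]
  simp only [sub_div, mul_sub, sum_sub_distrib, Pi.single_apply]
  rw [sum_comm (f := fun p q => c p q * ((if q = i then 1 else 0) / (ξ p - ξ q)))]
  simp only [ite_div, one_div, zero_div, mul_ite, mul_zero, sum_ite_irrel, sum_const_zero,
    sum_ite_eq', mem_univ, if_true]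
  rw [← sum_sub_distrib, mul_sum]
  refine sum_congr rfl fun j _ => ?_
  obtain rfl | hij := eq_or_ne i j
  · simp
  rw [← hsymm i j hij, ← neg_sub (ξ i), inv_neg]
  ring

theorem eq_add_sum_div_of_isLocalMin (hsymm : ∀ i j, i ≠ j → c i j = c j i) {ξ : ι → ℝ}
    (hξ : Function.Injective ξ) (hmin : IsLocalMin (energy a c) ξ) (i : ι) :
    ξ i = a i + ∑ j ∈ univ.erase i, c i j / (ξ i - ξ j) := by
  set e : ι → ℝ := Pi.single i 1
  have hline : IsLocalMin (fun t : ℝ => energy a c (ξ + t • e)) 0 := by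
    have hmin' : IsLocalMin (energy a c) (ξ + (0 : ℝ) • e) := by rwa [zero_smul, add_zero]
    exact hmin'.comp_continuous (g := fun t : ℝ => ξ + t • e) (by fun_prop)
  have hcrit := hline.hasDerivAt_eq_zero (hasDerivAt_energy_add_smul hξ e)
  rw [sum_sum_mul_single_sub_div hsymm] at hcrit
  simp only [e, Pi.single_apply, mul_ite, mul_one, mul_zero, sum_ite_eq', mem_univ, if_true]
    at hcrit
  linarith

end Energy

theorem IsCompact.exists_isMinOn_of_sublevel_subset {β α : Type*} [TopologicalSpace β]
    [LinearOrder α] [TopologicalSpace α] [ClosedIicTopology α] {f : β → α} {U K : Set β} {x₀ : β}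
    (hK : IsCompact K) (hf : ContinuousOn f K) (hx₀ : x₀ ∈ U)
    (hsub : ∀ x ∈ U, f x ≤ f x₀ → x ∈ K) : ∃ x ∈ K, IsMinOn f U x := by
  obtain ⟨x, hxK, hx⟩ := hK.exists_isMinOn ⟨x₀, hsub x₀ hx₀ le_rfl⟩ hf
  refine ⟨x, hxK, fun y hy => ?_⟩
  by_cases hy₀ : f y ≤ f x₀
  · exact hx (hsub y hy hy₀)
  · exact (hx (hsub x₀ hx₀ le_rfl)).trans (not_le.1 hy₀).le

lemma isOpen_setOf_strictMono {α : Type*} [LinearOrder α] [TopologicalSpace α]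
    [OrderClosedTopology α] {n : ℕ} : IsOpen {ξ : Fin (n + 1) → α | StrictMono ξ} := by
  simp only [Fin.strictMono_iff_lt_succ, Set.ofPred_forall]
  exact isOpen_iInter_of_finite fun k => isOpen_lt (continuous_apply _) (continuous_apply _)

theorem exists_isMinOn_energy_strictMono {n : ℕ} {a : Fin (n + 1) → ℝ}
    {c : Fin (n + 1) → Fin (n + 1) → ℝ}
    (hc : ∀ p q, p ≠ q → 0 ≤ c p q) (hpos : ∀ k : Fin n, 0 < c k.castSucc k.succ) :
    ∃ ξ, StrictMono ξ ∧ IsMinOn (energy a c) {ξ | StrictMono ξ} ξ := by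
  set ξ₀ : Fin (n + 1) → ℝ := fun i => i
  have hξ₀ : StrictMono ξ₀ := fun i j h => by simpa [ξ₀] using h
  set m := energy a c ξ₀
  set R := 2 * energySlope a c + 2 * |m| + 2
  set K : Set (Fin (n + 1) → ℝ) := Metric.closedBall 0 R ∩ ⋂ k : Fin n,
    {ξ | exp (-2 * (m + energySlope a c * R) / c k.castSucc k.succ) ≤ ξ k.succ - ξ k.castSucc}
  have hKU : K ⊆ {ξ | StrictMono ξ} := fun ξ hξ => Fin.strictMono_iff_lt_succ.2 fun k =>
    sub_pos.1 ((exp_pos _).trans_le (Set.mem_iInter.1 hξ.2 k))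
  have hK : IsCompact K := (isCompact_closedBall 0 R).inter_right
    (isClosed_iInter fun k => isClosed_le continuous_const (by fun_prop))
  have hsub : ∀ ξ ∈ {ξ | StrictMono ξ}, energy a c ξ ≤ m → ξ ∈ K := fun ξ hξ hm => by
    have hR : ‖ξ‖ ≤ R := norm_le_of_energy_le hc hm
    exact ⟨mem_closedBall_zero_iff.2 hR, Set.mem_iInter.2 fun k => exp_le_sub_of_energy_le hc hm hR
      (Fin.castSucc_lt_succ (i := k)).ne (hpos k) (hξ (Fin.castSucc_lt_succ (i := k)))⟩
  obtain ⟨ξ, hξK, hmin⟩ := hK.exists_isMinOn_of_sublevel_subset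
    (continuousOn_energy.mono fun ξ hξ => (hKU hξ).injective) hξ₀ hsub
  exact ⟨ξ, hKU hξK, hmin⟩

theorem exists_strictMono_solution
    (d : ℕ) (a : Fin d → ℝ) (c : Fin d → Fin d → ℝ)
    (hsymm : ∀ i j : Fin d, i ≠ j → c i j = c j i)
    (hnonneg : ∀ i j : Fin d, i ≠ j → 0 ≤ c i j)
    (hpos : ∀ i : Fin d, ∀ h : (i : ℕ) + 1 < d, 0 < c i ⟨(i : ℕ) + 1, h⟩) :
    ∃ ξ : Fin d → ℝ, StrictMono ξ ∧
      ∀ i : Fin d, ξ i = a i + ∑ j ∈ Finset.univ.erase i, c i j / (ξ i - ξ j) := by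
  cases d with
  | zero => exact ⟨Fin.elim0, fun i => i.elim0, fun i => i.elim0⟩
  | succ n =>
    obtain ⟨ξ, hξ, hmin⟩ :=
      exists_isMinOn_energy_strictMono hnonneg fun k => hpos k.castSucc (by simp)
    exact ⟨ξ, hξ, eq_add_sum_div_of_isLocalMin hsymm hξ.injective
      (hmin.isLocalMin (isOpen_setOf_strictMono.mem_nhds hξ))⟩
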